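/- arXiv:0705.1345 — 7 statements merged into one kernel-verified Lean document; each statement's English description precedes it below -/
import Mathlib

section
/- Let p, q ∈ [0,1] and y ≤ x be real numbers with y ≥ 0. Then p·(1−2q)·(e^{y/2} − e^{−y/2}) − p·e^{x/2} − (1−p)·e^{−x/2} ≤ 0. -/
open Real

lemma exp_half_sub_exp_neg_half_nonneg {y : ℝ} (hy : 0 ≤ y) :
    0 ≤ exp (y/2) - exp (-y/2) :=
  sub_nonneg.mpr (exp_le_exp.mpr (by linarith))

lemma exp_half_sub_exp_neg_half_le_exp_half {x y : ℝ} (hyx : y ≤ x) :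
    exp (y/2) - exp (-y/2) ≤ exp (x/2) :=
  calc exp (y/2) - exp (-y/2) ≤ exp (y/2) := sub_le_self _ (exp_pos _).le
    _ ≤ exp (x/2) := exp_le_exp.mpr (by linarith)

/-- Key pointwise inequality for subadditivity of the Bhattacharyya parameter
under the min-sum check node operation. -/
theorem gbsc_pointwise_ineq (p q x y : ℝ)
    (hp : p ∈ Set.Icc (0:ℝ) 1) (hq : q ∈ Set.Icc (0:ℝ) 1)
    (hy : 0 ≤ y) (hyx : y ≤ x) :
    p * (1 - 2*q) * (Real.exp (y/2) - Real.exp (-y/2))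
      - p * Real.exp (x/2) - (1 - p) * Real.exp (-x/2) ≤ 0 := by
  obtain ⟨hp0, hp1⟩ := hp
  have hweight : p * (1 - 2*q) ≤ p := by nlinarith [hq.1]
  have hfirst : p * (1 - 2*q) * (exp (y/2) - exp (-y/2)) ≤ p * exp (x/2) :=
    calc p * (1 - 2*q) * (exp (y/2) - exp (-y/2))
        ≤ p * (exp (y/2) - exp (-y/2)) :=
          mul_le_mul_of_nonneg_right hweight (exp_half_sub_exp_neg_half_nonneg hy)
      _ ≤ p * exp (x/2) :=
          mul_le_mul_of_nonneg_left (exp_half_sub_exp_neg_half_le_exp_half hyx) hp0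
  have htail : 0 ≤ (1 - p) * exp (-x/2) := mul_nonneg (by linarith) (exp_pos _).le
  linarith
end

section
/- Let X and Y be independent real-valued random variables and define Z = sign(X)·sign(Y)·min(|X|,|Y|) (with the convention sign(0)=0, or assuming X, Y are almost surely nonzero). Then E[e^{−Z/2}] ≤ E[e^{−X/2}] + E[e^{−Y/2}]. -/
open MeasureTheory ProbabilityTheory Real

/-!
Pointwise, the min-sum output dominates the smaller of its two inputs: if the inputs have the
same sign it is `min |X| |Y| ≥ 0`, and otherwise it is `-min |X| |Y|`, which is at least the
negative input. Hence `exp (-Z/2) ≤ max (exp (-X/2)) (exp (-Y/2)) ≤ exp (-X/2) + exp (-Y/2)`,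
and integrating this nonnegative bound gives the claim.
-/

lemma min_le_sign_mul_sign_mul_min_abs (a b : ℝ) :
    min a b ≤ Real.sign a * Real.sign b * min |a| |b| := by
  rcases lt_trichotomy a 0 with ha | rfl | ha <;> rcases lt_trichotomy b 0 with hb | rfl | hb <;>
    simp only [Real.sign_of_neg, Real.sign_of_pos, Real.sign_zero, abs_of_neg, abs_of_pos,
      abs_zero, *] <;>
    grind

lemma exp_neg_half_minsum_le (a b : ℝ) :
    exp (-(Real.sign a * Real.sign b * min |a| |b|) / 2) ≤ exp (-a / 2) + exp (-b / 2) := by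
  have hmin := min_le_sign_mul_sign_mul_min_abs a b
  calc exp (-(Real.sign a * Real.sign b * min |a| |b|) / 2)
      ≤ exp (-min a b / 2) := exp_le_exp.2 (by linarith)
    _ ≤ exp (-a / 2) + exp (-b / 2) := by
      rcases min_choice a b with h | h <;> rw [h] <;> linarith [exp_pos (-a / 2), exp_pos (-b / 2)]

theorem bhattacharyya_subadd_minsum_general
    {Ω : Type*} [MeasureSpace Ω]
    (X Y : Ω → ℝ)
    (hXi : Integrable (fun ω => Real.exp (-X ω / 2)) ℙ)
    (hYi : Integrable (fun ω => Real.exp (-Y ω / 2)) ℙ) :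
    (∫ ω, Real.exp (-(Real.sign (X ω) * Real.sign (Y ω) * min |X ω| |Y ω|) / 2))
      ≤ (∫ ω, Real.exp (-X ω / 2)) + ∫ ω, Real.exp (-Y ω / 2) := by
  rw [← integral_add hXi hYi]
  exact integral_mono_of_nonneg (ae_of_all _ fun ω => (exp_pos _).le) (hXi.add hYi)
    (ae_of_all _ fun ω => exp_neg_half_minsum_le (X ω) (Y ω))

/-- Subadditivity of the Bhattacharyya parameter `B(W) = E[exp(-W/2)]` under
the min-sum check node operation `Z = sign(X) sign(Y) min(|X|,|Y|)`. -/
theorem bhattacharyya_subadd_minsum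
    {Ω : Type*} [MeasureSpace Ω] [IsProbabilityMeasure (ℙ : Measure Ω)]
    (X Y : Ω → ℝ) (hX : Measurable X) (hY : Measurable Y)
    (hindep : IndepFun X Y ℙ)
    (hXi : Integrable (fun ω => Real.exp (-X ω / 2)) ℙ)
    (hYi : Integrable (fun ω => Real.exp (-Y ω / 2)) ℙ) :
    (∫ ω, Real.exp (-(Real.sign (X ω) * Real.sign (Y ω) * min |X ω| |Y ω|) / 2))
      ≤ (∫ ω, Real.exp (-X ω / 2)) + ∫ ω, Real.exp (-Y ω / 2) :=
  bhattacharyya_subadd_minsum_general X Y hXi hYi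
end

section
/- Let X₁, …, X_{k} be i.i.d. real-valued random variables (almost surely nonzero) and define Z = (∏_{i=1}^{k} sign(X_i)) · min_{1≤i≤k} |X_i|. Then E[e^{−Z/2}] ≤ k · E[e^{−X₁/2}]. -/
/-!
Pointwise, the min-sum output already lies above one of its inputs: if some `x j ≤ 0` then
`x j ≤ -min |x i| ≤ Z` because `|∏ sign (x i)| ≤ 1`, and otherwise `Z = min x i`. Hence
`exp (-Z/2) ≤ ∑ exp (-x i/2)`, and integrating gives `k` copies of the Bhattacharyya parameter
of `X₁`.
-/

open MeasureTheory ProbabilityTheory Real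

lemma Real.abs_sign_le_one (r : ℝ) : |Real.sign r| ≤ 1 := by
  rcases Real.sign_apply_eq r with h | h | h <;> simp [h]

section MinSum

variable {ι : Type*} [Fintype ι]

noncomputable def minSumCheck (x : ι → ℝ) : ℝ :=
  (∏ i, Real.sign (x i)) * ⨅ i, |x i|

lemma exists_le_minSumCheck [Nonempty ι] (x : ι → ℝ) : ∃ j, x j ≤ minSumCheck x := by
  have hbdd : BddBelow (Set.range fun i => |x i|) := (Set.finite_range _).bddBelow
  by_cases hneg : ∃ j, x j ≤ 0
  · obtain ⟨j, hj⟩ := hneg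
    have hsign : |∏ i, Real.sign (x i)| ≤ 1 := by
      rw [Finset.abs_prod]
      exact Finset.prod_le_one (fun _ _ => abs_nonneg _) fun i _ => Real.abs_sign_le_one _
    have hmin_nonneg : 0 ≤ ⨅ i, |x i| := le_ciInf fun i => abs_nonneg _
    have hmin_le : ⨅ i, |x i| ≤ -x j := abs_of_nonpos hj ▸ ciInf_le hbdd j
    refine ⟨j, ?_⟩
    unfold minSumCheck
    nlinarith [neg_abs_le (∏ i, Real.sign (x i))]
  · push Not at hneg
    obtain ⟨j, hj⟩ := Finite.exists_min fun i => |x i|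
    refine ⟨j, le_of_eq ?_⟩
    have hsign : ∏ i, Real.sign (x i) = 1 :=
      Finset.prod_eq_one fun i _ => Real.sign_of_pos (hneg i)
    rw [minSumCheck, hsign, one_mul, ← abs_of_pos (hneg j)]
    exact (le_antisymm (ciInf_le hbdd j) (le_ciInf hj)).symm

lemma exp_neg_half_minSumCheck_le_sum [Nonempty ι] (x : ι → ℝ) :
    exp (-minSumCheck x / 2) ≤ ∑ i, exp (-x i / 2) := by
  obtain ⟨j, hj⟩ := exists_le_minSumCheck x
  calc exp (-minSumCheck x / 2) ≤ exp (-x j / 2) := exp_le_exp.mpr (by linarith)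
    _ ≤ ∑ i, exp (-x i / 2) :=
      Finset.single_le_sum (f := fun i => exp (-x i / 2)) (fun i _ => (exp_pos _).le)
        (Finset.mem_univ j)

end MinSum

theorem bhattacharyya_minsum_k_inputs_general
    {Ω : Type*} [MeasureSpace Ω] [IsProbabilityMeasure (ℙ : Measure Ω)]
    (k : ℕ) (hk : 0 < k) (X : Fin k → Ω → ℝ)
    (hident : ∀ i, IdentDistrib (X i) (X ⟨0, hk⟩) ℙ ℙ)
    (hint : Integrable (fun ω => Real.exp (-X ⟨0, hk⟩ ω / 2)) ℙ) :
    (∫ ω, Real.exp (-((∏ i, Real.sign (X i ω)) * ⨅ i, |X i ω|) / 2))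
      ≤ k * ∫ ω, Real.exp (-X ⟨0, hk⟩ ω / 2) := by
  have : Nonempty (Fin k) := ⟨⟨0, hk⟩⟩
  have hident_exp : ∀ i, IdentDistrib (fun ω => exp (-X i ω / 2))
      (fun ω => exp (-X ⟨0, hk⟩ ω / 2)) ℙ ℙ :=
    fun i => (hident i).comp (by fun_prop : Measurable fun t : ℝ => exp (-t / 2))
  have hint_i : ∀ i, Integrable (fun ω => exp (-X i ω / 2)) ℙ :=
    fun i => (hident_exp i).integrable_iff.mpr hint
  calc (∫ ω, exp (-minSumCheck (fun i => X i ω) / 2))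
      ≤ ∫ ω, ∑ i, exp (-X i ω / 2) :=
        integral_mono_of_nonneg (ae_of_all _ fun _ => (exp_pos _).le)
          (integrable_finsetSum _ fun i _ => hint_i i)
          (ae_of_all _ fun ω => exp_neg_half_minSumCheck_le_sum fun i => X i ω)
    _ = ∑ i, ∫ ω, exp (-X i ω / 2) := integral_finsetSum _ fun i _ => hint_i i
    _ = k * ∫ ω, exp (-X ⟨0, hk⟩ ω / 2) := by
        simp [fun i => (hident_exp i).integral_eq]

/-- For `k` i.i.d. inputs, the min-sum check node output
`Z = (∏ sign(X_i)) · min_i |X_i|` satisfies `E[exp(-Z/2)] ≤ k · E[exp(-X₁/2)]`. -/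
theorem bhattacharyya_minsum_k_inputs
    {Ω : Type*} [MeasureSpace Ω] [IsProbabilityMeasure (ℙ : Measure Ω)]
    (k : ℕ) (hk : 0 < k) (X : Fin k → Ω → ℝ)
    (hmeas : ∀ i, Measurable (X i))
    (hindep : iIndepFun X ℙ)
    (hident : ∀ i, IdentDistrib (X i) (X ⟨0, hk⟩) ℙ ℙ)
    (hne : ∀ i, ∀ᵐ ω ∂ℙ, X i ω ≠ 0)
    (hint : Integrable (fun ω => Real.exp (-X ⟨0, hk⟩ ω / 2)) ℙ) :
    (∫ ω, Real.exp (-((∏ i, Real.sign (X i ω)) * ⨅ i, |X i ω|) / 2))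
      ≤ k * ∫ ω, Real.exp (-X ⟨0, hk⟩ ω / 2) :=
  bhattacharyya_minsum_k_inputs_general k hk X hident hint
end

section
/- Let X and Y be independent random variables with (Lebesgue) densities a and b on ℝ satisfying, for all x > 0: a(x) ≥ a(−x), b(x) ≥ b(−x). Let c be the density of Z = sign(X)sign(Y)min(|X|,|Y|). Then c(x) ≥ c(−x) for all x > 0. -/
/-!
For `x > 0`, `c x - c (-x) = (a x - a (-x)) * (P(Y > x) - P(Y < -x)) + (b x - b (-x)) * (P(X > x) - P(X < -x))`,
and every factor is nonnegative: reflecting `s ↦ -s` carries the lower tail integral of a biased density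
onto the upper one, where the integrand only grows.
-/

open MeasureTheory Real

theorem setIntegral_Iio_neg_le_setIntegral_Ioi {f : ℝ → ℝ} (hf : Integrable f) {x : ℝ}
    (hbias : ∀ y > x, f (-y) ≤ f y) :
    ∫ s in Set.Iio (-x), f s ≤ ∫ s in Set.Ioi x, f s := by
  rw [← integral_Iic_eq_integral_Iio, ← integral_comp_neg_Ioi]
  exact setIntegral_mono_on hf.comp_neg.integrableOn hf.integrableOn measurableSet_Ioi hbias

theorem minsum_check_preserves_bias_general
    (a b c : ℝ → ℝ)
    (hai : Integrable a) (hbi : Integrable b)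
    (habias : ∀ x > (0:ℝ), a (-x) ≤ a x)
    (hbbias : ∀ x > (0:ℝ), b (-x) ≤ b x)
    (hc : ∀ x : ℝ, c x =
      a x * (∫ s in Set.Ioi |x|, b s) + b x * (∫ s in Set.Ioi |x|, a s)
        + a (-x) * (∫ s in Set.Iio (-|x|), b s)
        + b (-x) * (∫ s in Set.Iio (-|x|), a s)) :
    ∀ x > (0:ℝ), c (-x) ≤ c x := by
  intro x hx
  have htail {f : ℝ → ℝ} (hf : Integrable f) (hbias : ∀ y > (0:ℝ), f (-y) ≤ f y) :
      0 ≤ (∫ s in Set.Ioi x, f s) - ∫ s in Set.Iio (-x), f s :=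
    sub_nonneg.2 <| setIntegral_Iio_neg_le_setIntegral_Ioi hf fun y hy ↦ hbias y (hx.trans hy)
  have hdiff : c x - c (-x) =
      (a x - a (-x)) * ((∫ s in Set.Ioi x, b s) - ∫ s in Set.Iio (-x), b s)
        + (b x - b (-x)) * ((∫ s in Set.Ioi x, a s) - ∫ s in Set.Iio (-x), a s) := by
    rw [hc x, hc (-x), abs_neg, abs_of_pos hx, neg_neg]
    ring
  refine sub_nonneg.1 (hdiff ▸ add_nonneg ?_ ?_)
  · exact mul_nonneg (sub_nonneg.2 (habias x hx)) (htail hbi hbbias)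
  · exact mul_nonneg (sub_nonneg.2 (hbbias x hx)) (htail hai habias)

/-- Positively biased densities remain positively biased under the min-sum
check node operation. -/
theorem minsum_check_preserves_bias
    (a b c : ℝ → ℝ)
    (ha0 : ∀ x, 0 ≤ a x) (hb0 : ∀ x, 0 ≤ b x)
    (hai : Integrable a) (hbi : Integrable b)
    (ha1 : ∫ x, a x = 1) (hb1 : ∫ x, b x = 1)
    (habias : ∀ x > (0:ℝ), a (-x) ≤ a x)
    (hbbias : ∀ x > (0:ℝ), b (-x) ≤ b x)
    (hc : ∀ x : ℝ, c x =
      a x * (∫ s in Set.Ioi |x|, b s) + b x * (∫ s in Set.Ioi |x|, a s)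
        + a (-x) * (∫ s in Set.Iio (-|x|), b s)
        + b (-x) * (∫ s in Set.Iio (-|x|), a s)) :
    ∀ x > (0:ℝ), c (-x) ≤ c x :=
  minsum_check_preserves_bias_general a b c hai hbi habias hbbias hc
end

section
/- Let X and Y be independent random variables with densities a and b on ℝ satisfying, for all x > 0: a(x) ≥ a(−x), b(x) ≥ b(−x), a(x) ≤ e^x·a(−x), and b(x) ≤ e^x·b(−x). Let c be the density of Z = sign(X)sign(Y)min(|X|,|Y|). Then c(x) ≤ e^x·c(−x) for all x > 0. -/
open MeasureTheory Real

lemma le_exp_mul_of_le {x u v : ℝ} (hx : 0 ≤ x) (hu : 0 ≤ u) (h : v ≤ u) : v ≤ exp x * u :=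
  h.trans (le_mul_of_one_le_left hu (one_le_exp hx))

theorem minsum_check_preserves_exp_bound_general
    (a b c : ℝ → ℝ)
    (ha0 : ∀ x, 0 ≤ a x) (hb0 : ∀ x, 0 ≤ b x)
    (habias : ∀ x > (0:ℝ), a (-x) ≤ a x)
    (hbbias : ∀ x > (0:ℝ), b (-x) ≤ b x)
    (haexp : ∀ x > (0:ℝ), a x ≤ Real.exp x * a (-x))
    (hbexp : ∀ x > (0:ℝ), b x ≤ Real.exp x * b (-x))
    (hc : ∀ x : ℝ, c x =
      a x * (∫ s in Set.Ioi |x|, b s) + b x * (∫ s in Set.Ioi |x|, a s)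
        + a (-x) * (∫ s in Set.Iio (-|x|), b s)
        + b (-x) * (∫ s in Set.Iio (-|x|), a s)) :
    ∀ x > (0:ℝ), c x ≤ Real.exp x * c (-x) := by
  intro x hx
  -- `c x` and `c (-x)` share their four tail integrals; only the density values trade places.
  have term {u v : ℝ} {f : ℝ → ℝ} (hf : ∀ s, 0 ≤ f s) (S : Set ℝ) (h : u ≤ exp x * v) :
      u * ∫ s in S, f s ≤ exp x * (v * ∫ s in S, f s) := by
    rw [← mul_assoc]
    exact mul_le_mul_of_nonneg_right h (integral_nonneg hf)
  rw [hc x, hc (-x), abs_neg, neg_neg, mul_add, mul_add, mul_add]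
  gcongr ?_ + ?_ + ?_ + ?_
  · exact term hb0 _ (haexp x hx)
  · exact term ha0 _ (hbexp x hx)
  · exact term hb0 _ (le_exp_mul_of_le hx.le (ha0 x) (habias x hx))
  · exact term ha0 _ (le_exp_mul_of_le hx.le (hb0 x) (hbbias x hx))

/-- The upper bound `c(x) ≤ eˣ c(−x)` is preserved by the min-sum check node
operation for positively biased densities satisfying `a(x) ≤ eˣ a(−x)`. -/
theorem minsum_check_preserves_exp_bound
    (a b c : ℝ → ℝ)
    (ha0 : ∀ x, 0 ≤ a x) (hb0 : ∀ x, 0 ≤ b x)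
    (hai : Integrable a) (hbi : Integrable b)
    (ha1 : ∫ x, a x = 1) (hb1 : ∫ x, b x = 1)
    (habias : ∀ x > (0:ℝ), a (-x) ≤ a x)
    (hbbias : ∀ x > (0:ℝ), b (-x) ≤ b x)
    (haexp : ∀ x > (0:ℝ), a x ≤ Real.exp x * a (-x))
    (hbexp : ∀ x > (0:ℝ), b x ≤ Real.exp x * b (-x))
    (hc : ∀ x : ℝ, c x =
      a x * (∫ s in Set.Ioi |x|, b s) + b x * (∫ s in Set.Ioi |x|, a s)
        + a (-x) * (∫ s in Set.Iio (-|x|), b s)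
        + b (-x) * (∫ s in Set.Iio (-|x|), a s)) :
    ∀ x > (0:ℝ), c x ≤ Real.exp x * c (-x) :=
  minsum_check_preserves_exp_bound_general a b c ha0 hb0 habias hbbias haexp hbexp hc
end

section
/- Let a be a probability density on ℝ satisfying the symmetry condition a(−x) = e^{−x}·a(x) for all x. Then for every α > 0, ∫ e^{−αx} a(x) dx ≥ ∫ e^{−x/2} a(x) dx, i.e., B_α(a) ≥ B(a), with the Bhattacharyya parameter (α = 1/2) being the minimum over α > 0. -/
/-!
Reflecting `x ↦ -x` and using the symmetry shows `B_α(a) = B_{1-α}(a)`, so `B_α(a)` is the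
integral of `(e^{-αx} + e^{-(1-α)x}) a(x) / 2 = cosh((α - 1/2) x) e^{-x/2} a(x)`, and `cosh ≥ 1`.
-/

open MeasureTheory Real

section Symmetric

variable {a : ℝ → ℝ}

lemma exp_mul_of_symmetric_comp_neg (hsym : ∀ x, a (-x) = exp (-x) * a x) (α x : ℝ) :
    exp (-α * -x) * a (-x) = exp ((α - 1) * x) * a x := by
  rw [hsym, ← mul_assoc, ← exp_add]
  ring_nf

lemma integral_exp_mul_eq_of_symmetric (hsym : ∀ x, a (-x) = exp (-x) * a x) (α : ℝ) :
    ∫ x, exp (-α * x) * a x = ∫ x, exp ((α - 1) * x) * a x := by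
  rw [← integral_neg_eq_self]
  simp only [exp_mul_of_symmetric_comp_neg hsym]

lemma integrable_exp_mul_of_symmetric (hsym : ∀ x, a (-x) = exp (-x) * a x) {α : ℝ}
    (h : Integrable (fun x => exp (-α * x) * a x)) :
    Integrable (fun x => exp ((α - 1) * x) * a x) := by
  simpa only [exp_mul_of_symmetric_comp_neg hsym] using h.comp_neg

end Symmetric

lemma exp_add_exp_eq_two_mul_cosh_mul_exp (α x : ℝ) :
    exp (-α * x) + exp ((α - 1) * x) = 2 * cosh ((α - 1 / 2) * x) * exp (-x / 2) := by
  rw [cosh_eq, mul_div_cancel₀ _ two_ne_zero, add_mul, ← exp_add, ← exp_add]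
  ring_nf

theorem Balpha_ge_bhattacharyya_of_symmetric_general
    (a : ℝ → ℝ) (ha0 : ∀ x, 0 ≤ a x)
    (hsym : ∀ x : ℝ, a (-x) = Real.exp (-x) * a x)
    (α : ℝ)
    (hint : Integrable (fun x => Real.exp (-α * x) * a x)) :
    (∫ x, Real.exp (-x / 2) * a x) ≤ ∫ x, Real.exp (-α * x) * a x := by
  have hint' := integrable_exp_mul_of_symmetric hsym hint
  have hB_nonneg : ∀ x, 0 ≤ exp (-x / 2) * a x := fun x => mul_nonneg (exp_pos _).le (ha0 x)
  have hcosh : ∀ x, cosh ((α - 1 / 2) * x) * (exp (-x / 2) * a x) =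
      (exp (-α * x) * a x + exp ((α - 1) * x) * a x) / 2 := fun x => by
    rw [← add_mul, exp_add_exp_eq_two_mul_cosh_mul_exp]
    ring
  calc ∫ x, exp (-x / 2) * a x
      ≤ ∫ x, cosh ((α - 1 / 2) * x) * (exp (-x / 2) * a x) := by
        refine integral_mono_of_nonneg (ae_of_all _ hB_nonneg) ?_
          (ae_of_all _ fun x => le_mul_of_one_le_left (hB_nonneg x) (one_le_cosh _))
        simpa only [hcosh, Pi.add_apply] using (hint.add hint').div_const 2
    _ = ∫ x, exp (-α * x) * a x := by
        simp only [hcosh]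
        rw [integral_div, integral_add hint hint', ← integral_exp_mul_eq_of_symmetric hsym]
        ring

/-- For a symmetric density `a` (i.e. `a(−x) = e^{−x} a(x)`), the exponential
functional `B_α(a) = ∫ e^{−αx} a(x) dx` is minimized at `α = 1/2`:
`B_α(a) ≥ B(a)` for every `α > 0`. -/
theorem Balpha_ge_bhattacharyya_of_symmetric
    (a : ℝ → ℝ) (ha0 : ∀ x, 0 ≤ a x) (hai : Integrable a) (ha1 : ∫ x, a x = 1)
    (hsym : ∀ x : ℝ, a (-x) = Real.exp (-x) * a x)
    (α : ℝ) (hα : 0 < α)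
    (hint : Integrable (fun x => Real.exp (-α * x) * a x))
    (hint2 : Integrable (fun x => Real.exp (-x / 2) * a x)) :
    (∫ x, Real.exp (-x / 2) * a x) ≤ ∫ x, Real.exp (-α * x) * a x :=
  Balpha_ge_bhattacharyya_of_symmetric_general a ha0 hsym α hint
end

section
/- Let p, q ∈ [0,1] and 0 ≤ y ≤ x. Consider the two-point measures a = p·δ_{−x} + (1−p)·δ_x and b = q·δ_{−y} + (1−q)·δ_y, and let c be the distribution of sign(X)sign(Y)min(|X|,|Y|) where X ∼ a and Y ∼ b are independent, namely c = (p(1−q) + q(1−p))·δ_{−y} + (pq + (1−p)(1−q))·δ_y. Then B(c) ≤ B(a) + B(b), where B(μ) = ∫ e^{−z/2} μ(dz). -/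
open MeasureTheory Real

/-
The Bhattacharyya parameter of `t δ_{-u} + (1-t) δ_u` is `e^{-u/2} + 2 t sinh (u/2)`, affine and
increasing in the weight `t`. The check output has weight `r = q + p (1 - 2q)` at `-y`, so
`B(c) - B(b) = 2 p (1 - 2q) sinh (y/2) ≤ 2 p sinh (x/2) ≤ B(a)`.
-/

noncomputable def gbsc (t u : ℝ) : Measure ℝ :=
  ENNReal.ofReal t • Measure.dirac (-u) + ENNReal.ofReal (1 - t) • Measure.dirac u

noncomputable def bhattacharyya (μ : Measure ℝ) : ℝ :=
  ∫ z, exp (-z / 2) ∂μ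

theorem integral_gbsc {E : Type*} [NormedAddCommGroup E] [NormedSpace ℝ E] [CompleteSpace E]
    {t : ℝ} (ht : t ∈ Set.Icc (0 : ℝ) 1) (u : ℝ) (f : ℝ → E) :
    ∫ z, f z ∂(gbsc t u) = t • f (-u) + (1 - t) • f u := by
  have hf : ∀ v, Integrable f (Measure.dirac v) := fun v => integrable_dirac enorm_lt_top
  rw [gbsc, integral_add_measure ((hf _).smul_measure ENNReal.ofReal_ne_top)
      ((hf _).smul_measure ENNReal.ofReal_ne_top), integral_smul_measure, integral_smul_measure,
    integral_dirac, integral_dirac, ENNReal.toReal_ofReal ht.1,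
    ENNReal.toReal_ofReal (sub_nonneg.2 ht.2)]

theorem bhattacharyya_gbsc {t : ℝ} (ht : t ∈ Set.Icc (0 : ℝ) 1) (u : ℝ) :
    bhattacharyya (gbsc t u) = exp (-u / 2) + 2 * t * sinh (u / 2) := by
  rw [bhattacharyya, integral_gbsc ht, sinh_eq, neg_neg, neg_div]
  simp only [smul_eq_mul]
  ring

/-- Bhattacharyya subadditivity for generalized BSC densities: two-point input
measures `a = p δ_{−x} + (1−p) δ_x`, `b = q δ_{−y} + (1−q) δ_y` with
`0 ≤ y ≤ x` yield the min-sum check output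
`c = (p(1−q)+q(1−p)) δ_{−y} + (pq+(1−p)(1−q)) δ_y`, and `B(c) ≤ B(a) + B(b)`. -/
theorem gbsc_bhattacharyya_subadd
    (p q x y : ℝ)
    (hp : p ∈ Set.Icc (0:ℝ) 1) (hq : q ∈ Set.Icc (0:ℝ) 1)
    (hy : 0 ≤ y) (hyx : y ≤ x)
    (a b c : Measure ℝ)
    (ha : a = ENNReal.ofReal p • Measure.dirac (-x)
              + ENNReal.ofReal (1 - p) • Measure.dirac x)
    (hb : b = ENNReal.ofReal q • Measure.dirac (-y)
              + ENNReal.ofReal (1 - q) • Measure.dirac y)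
    (hc : c = ENNReal.ofReal (p * (1 - q) + q * (1 - p)) • Measure.dirac (-y)
              + ENNReal.ofReal (p * q + (1 - p) * (1 - q)) • Measure.dirac y) :
    (∫ z, Real.exp (-z / 2) ∂c)
      ≤ (∫ z, Real.exp (-z / 2) ∂a) + ∫ z, Real.exp (-z / 2) ∂b := by
  obtain ⟨hp0, hp1⟩ := hp
  obtain ⟨hq0, hq1⟩ := hq
  have hr : p * (1 - q) + q * (1 - p) ∈ Set.Icc (0 : ℝ) 1 := ⟨by nlinarith, by nlinarith⟩
  have hc' : c = gbsc (p * (1 - q) + q * (1 - p)) y := by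
    rw [hc, show p * q + (1 - p) * (1 - q) = 1 - (p * (1 - q) + q * (1 - p)) by ring, gbsc]
  change bhattacharyya c ≤ bhattacharyya a + bhattacharyya b
  rw [hc', show a = gbsc p x from ha, show b = gbsc q y from hb, bhattacharyya_gbsc hr,
    bhattacharyya_gbsc ⟨hp0, hp1⟩, bhattacharyya_gbsc ⟨hq0, hq1⟩]
  have hsy : 0 ≤ sinh (y / 2) := sinh_nonneg_iff.2 (by linarith)
  have hsyx : sinh (y / 2) ≤ sinh (x / 2) := sinh_le_sinh.2 (by linarith)
  nlinarith [mul_nonneg hp0 (sub_nonneg.2 hsyx), mul_nonneg (mul_nonneg hp0 hq0) hsy,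
    exp_pos (-x / 2)]
end
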